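/- arXiv:1610.02243 — 7 statements merged into one kernel-verified Lean document; each statement's English description precedes it below -/
import Mathlib

section
/- For every quiddity cycle with representative (c_1,...,c_n), the matrix product η(c_1)η(c_2)···η(c_n) equals −Id, where η(a) denotes the 2×2 integer matrix with rows (a,−1) and (1,0). -/
/-- One generating move of the dihedral action on finite sequences:
cyclic rotation by one, or reversal. -/
def dihStep (c d : List ℕ) : Prop := d = c.rotate 1 ∨ d = c.reverse

/-- The equivalence relation on finite sequences generated by cyclic
rotations and reversal (the dihedral group action). -/
def DihEquiv : List ℕ → List ℕ → Prop := Relation.EqvGen dihStep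

/-- The lists that are representatives of quiddity cycles: the smallest
dihedrally closed collection containing `(0,0)` and closed under the rule
`(c₁,…,cₙ) ↦ (c₁+1, 1, c₂+1, c₃, …, cₙ)`. -/
inductive IsQuiddity : List ℕ → Prop
  | base : IsQuiddity [0, 0]
  | dih {c d : List ℕ} : IsQuiddity c → dihStep c d → IsQuiddity d
  | grow {a b : ℕ} {t : List ℕ} : IsQuiddity (a :: b :: t) →
      IsQuiddity ((a + 1) :: 1 :: (b + 1) :: t)

/-- The (class of the) cycle `c` contains the finite sequence `d`:
some representative of `c` has `d` as a block of consecutive entries. -/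
def CycContains (c d : List ℕ) : Prop := ∃ c', DihEquiv c c' ∧ d <:+: c'

/-- The matrix `η(a)`. -/
def eta (a : ℤ) : Matrix (Fin 2) (Fin 2) ℤ := !![a, -1; 1, 0]

/-!
Induction on `IsQuiddity`: each generating move preserves `η(c₁)⋯η(cₙ) = -1`.
For `(0,0)` this is `η(0)² = -1`. A rotation turns `A * B = -1` into `B * A = -1`, since
one-sided inverses of square integer matrices are two-sided. Transposition reverses a product
and conjugation by `diag(1,-1)` maps each `η(a)ᵀ` back to `η(a)`, so the reversed product is
`diag(1,-1) (-1)ᵀ diag(1,-1) = -1`. The growth move is the identity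
`η(a+1) η(1) η(b+1) = η(a) η(b)`.
-/

open Matrix

theorem mul_eq_neg_one_comm {R : Type*} [Ring R] [IsDedekindFiniteMonoid R] {a b : R}
    (h : a * b = -1) : b * a = -1 := by
  have : -b * a = 1 := mul_eq_one_comm.mp (by rw [mul_neg, h, neg_neg])
  rwa [neg_mul, neg_eq_iff_eq_neg] at this

theorem List.prod_rotate_one_eq_neg_one {R : Type*} [Ring R] [IsDedekindFiniteMonoid R]
    {l : List R} (h : l.prod = -1) : (l.rotate 1).prod = -1 := by
  cases l with
  | nil => exact h
  | cons a t =>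
    rw [List.prod_cons] at h
    simpa using mul_eq_neg_one_comm h

theorem List.prod_map_conj_of_mul_self {M : Type*} [Monoid M] {s : M} (hs : s * s = 1)
    (l : List M) : (l.map fun x => s * x * s).prod = s * l.prod * s := by
  induction l with
  | nil => simp [hs]
  | cons x t ih =>
    rw [List.map_cons, List.prod_cons, List.prod_cons, ih]
    simp only [mul_assoc, ← mul_assoc s s, hs, one_mul]

def signFlip : Matrix (Fin 2) (Fin 2) ℤ := !![1, 0; 0, -1]

theorem signFlip_mul_self : signFlip * signFlip = 1 := by
  simp [signFlip, one_fin_two]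

theorem signFlip_mul_eta_transpose_mul_signFlip (a : ℤ) :
    signFlip * (eta a)ᵀ * signFlip = eta a := by
  ext i j
  fin_cases i <;> fin_cases j <;> simp [signFlip, eta, mul_apply, vecMul, dotProduct]

theorem prod_map_eta_reverse (l : List ℤ) :
    (l.reverse.map eta).prod = signFlip * (l.map eta).prodᵀ * signFlip := by
  rw [transpose_list_prod, ← List.prod_map_conj_of_mul_self signFlip_mul_self,
    List.map_reverse, List.map_reverse, List.map_map, List.map_map]
  simp only [Function.comp_def, signFlip_mul_eta_transpose_mul_signFlip]

theorem eta_add_one_mul_eta_one_mul_eta_add_one (a b : ℤ) :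
    eta (a + 1) * eta 1 * eta (b + 1) = eta a * eta b := by
  simp only [eta, mul_fin_two]
  ring_nf

theorem IsQuiddity.prod_map_eta {c : List ℕ} (hc : IsQuiddity c) :
    (c.map fun a : ℕ => eta a).prod = -1 := by
  induction hc with
  | base => simp [eta, one_fin_two]
  | @dih c _ _ hstep ih =>
    rcases hstep with rfl | rfl
    · rw [List.map_rotate]
      exact List.prod_rotate_one_eq_neg_one ih
    · have h := prod_map_eta_reverse (c.map (↑))
      simp only [List.map_reverse, List.map_map, Function.comp_def] at h ⊢
      rw [h, ih, transpose_neg, transpose_one, mul_neg, mul_one, neg_mul, signFlip_mul_self]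
  | grow _ ih =>
    simp only [List.map_cons, List.prod_cons, Nat.cast_add, Nat.cast_one] at ih ⊢
    rwa [← mul_assoc, ← mul_assoc, eta_add_one_mul_eta_one_mul_eta_add_one, mul_assoc]

/-- For every quiddity cycle with representative `(c₁,…,cₙ)`, the product
`η(c₁)⋯η(cₙ)` equals `-Id`. -/
theorem quiddity_eta_prod (c : List ℕ) (hc : IsQuiddity c) :
    (c.map fun a => eta (a : ℤ)).prod = -1 := by
  -- `c` is elaborated here as the list `c >>= fun a => pure ↑a : List ℤ`.
  simpa only [bind_pure_comp, List.map_eq_map, List.map_map, Function.comp_def] using hc.prod_map_eta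
end

section
/- If a quiddity cycle c has two cyclically consecutive entries both equal to 1 (in some, equivalently any, representative), then c is the class of (1,1,1). -/
/-!
Induct on the generation of quiddity cycles. Rotation and reversal preserve both the existence
of two cyclically adjacent `1`s and the list `[1, 1, 1]`, so only the growth step
`(a, b, t) ↦ (a + 1, 1, b + 1, t)` matters. There, adjacent `1`s either touch one of the first
three entries, forcing `a = 0` or `b = 0`, or lie inside `t`. A quiddity cycle with an entry `0`
is `(0, 0)`, which turns the first case into `(1, 1, 1)`; in the second case the predecessor
already has adjacent `1`s, so by induction it is `(1, 1, 1)` and `t = [1]` is too short.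
-/

namespace List

variable {α : Type*}

theorem IsRotated.exists_append_eq {l l' : List α} (h : l ~r l') :
    ∃ s t, l = s ++ t ∧ l' = t ++ s := by
  obtain ⟨n, hn, rfl⟩ := isRotated_iff_mod.mp h
  exact ⟨l.take n, l.drop n, (take_append_drop n l).symm, rotate_eq_drop_append_take hn⟩

def HasCyclicPair (x y : α) (l : List α) : Prop := ∃ r, l ~r x :: y :: r

variable {x y : α} {l l' : List α}

theorem IsRotated.hasCyclicPair_iff (h : l ~r l') :
    l.HasCyclicPair x y ↔ l'.HasCyclicPair x y :=
  ⟨fun ⟨r, hr⟩ => ⟨r, h.symm.trans hr⟩, fun ⟨r, hr⟩ => ⟨r, h.trans hr⟩⟩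

theorem HasCyclicPair.reverse (h : l.HasCyclicPair x y) : l.reverse.HasCyclicPair y x := by
  obtain ⟨r, hr⟩ := h
  refine ⟨r.reverse, hr.reverse.trans ?_⟩
  simpa using isRotated_append (l := r.reverse) (l' := [y, x])

theorem hasCyclicPair_reverse_iff : l.reverse.HasCyclicPair x y ↔ l.HasCyclicPair y x :=
  ⟨fun h => by simpa using h.reverse, HasCyclicPair.reverse⟩

theorem IsInfix.hasCyclicPair (h : [x, y] <:+: l) : l.HasCyclicPair x y := by
  obtain ⟨s, t, rfl⟩ := h
  exact ⟨t ++ s, by simpa using isRotated_append (l := s) (l' := [x, y] ++ t)⟩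

theorem HasCyclicPair.eq_or_eq_or_infix_of_cons_cons_cons {u : α} {t : List α}
    (h : (x :: u :: y :: t).HasCyclicPair u u) : x = u ∨ y = u ∨ [u, u] <:+: t := by
  obtain ⟨r, hr⟩ := h
  obtain ⟨s, p, hsp, hps⟩ := hr.exists_append_eq
  rcases s with _ | ⟨_, _ | ⟨_, _ | ⟨_, s⟩⟩⟩
  · rw [nil_append] at hsp
    subst hsp
    simp only [append_nil, cons.injEq] at hps
    exact .inl hps.1.symm
  all_goals simp only [cons_append, nil_append, cons.injEq] at hsp
  · obtain ⟨rfl, rfl⟩ := hsp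
    simp only [cons_append, cons.injEq] at hps
    exact .inr (.inl hps.2.1.symm)
  · obtain ⟨rfl, rfl, rfl⟩ := hsp
    simp only [cons_append, cons.injEq] at hps
    exact .inr (.inl hps.1.symm)
  · obtain ⟨rfl, rfl, rfl, rfl⟩ := hsp
    rcases p with _ | ⟨_, _ | ⟨_, p⟩⟩ <;>
      simp only [nil_append, cons_append, cons.injEq] at hps
    · exact .inl hps.1.symm
    · exact .inl hps.2.1.symm
    · obtain ⟨rfl, rfl, -⟩ := hps
      exact .inr (.inr ⟨s, p, by simp⟩)

end List

open List

theorem dihStep.hasCyclicPair_iff {u : ℕ} {c d : List ℕ} (h : dihStep c d) :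
    c.HasCyclicPair u u ↔ d.HasCyclicPair u u := by
  rcases h with rfl | rfl
  · exact (IsRotated.forall c 1).symm.hasCyclicPair_iff
  · exact hasCyclicPair_reverse_iff.symm

theorem DihEquiv.hasCyclicPair_iff {u : ℕ} {c d : List ℕ} (h : DihEquiv c d) :
    c.HasCyclicPair u u ↔ d.HasCyclicPair u u := by
  induction h with
  | rel _ _ h => exact h.hasCyclicPair_iff
  | refl => rfl
  | symm _ _ _ ih => exact ih.symm
  | trans _ _ _ _ _ ih₁ ih₂ => exact ih₁.trans ih₂

theorem IsQuiddity.eq_of_zero_mem {c : List ℕ} (hc : IsQuiddity c) (h0 : 0 ∈ c) :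
    c = [0, 0] := by
  induction hc with
  | base => rfl
  | dih _ hcd ih =>
    rcases hcd with rfl | rfl
    · rw [ih ((IsRotated.forall _ 1).mem_iff.mp h0)]; rfl
    · rw [ih (mem_reverse.mp h0)]; rfl
  | @grow a b t _ ih =>
    have ht : 0 ∈ t := by simpa using h0
    obtain ⟨-, -, rfl⟩ : a = 0 ∧ b = 0 ∧ t = [] := by
      simpa using ih (mem_cons_of_mem _ (mem_cons_of_mem _ ht))
    exact (not_mem_nil ht).elim

theorem IsQuiddity.eq_of_hasCyclicPair_one_one {c : List ℕ} (hc : IsQuiddity c)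
    (h11 : c.HasCyclicPair 1 1) : c = [1, 1, 1] := by
  induction hc with
  | base =>
    obtain ⟨r, hr⟩ := h11
    simpa using hr.mem_iff.mpr (mem_cons_self (a := 1))
  | dih _ hcd ih =>
    obtain rfl := ih (hcd.hasCyclicPair_iff.mpr h11)
    rcases hcd with rfl | rfl <;> rfl
  | @grow a b t hq ih =>
    rcases h11.eq_or_eq_or_infix_of_cons_cons_cons with ha | hb | ht
    · obtain rfl : a = 0 := by omega
      obtain ⟨rfl, rfl⟩ : b = 0 ∧ t = [] := by simpa using hq.eq_of_zero_mem (by simp)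
      rfl
    · obtain rfl : b = 0 := by omega
      obtain ⟨rfl, rfl⟩ : a = 0 ∧ t = [] := by simpa using hq.eq_of_zero_mem (by simp)
      rfl
    · have hab := ih (infix_cons (infix_cons ht)).hasCyclicPair
      obtain ⟨-, -, rfl⟩ : a = 1 ∧ b = 1 ∧ t = [1] := by simpa using hab
      exact absurd ht.length_le (by simp)

/-- If a quiddity cycle has two cyclically consecutive entries both equal to `1`
(in some, equivalently any, representative), then it is the class of `(1,1,1)`. -/
theorem quiddity_ones_adjacent (c : List ℕ) (hc : IsQuiddity c)
    (h11 : CycContains c [1, 1]) : DihEquiv c [1, 1, 1] := by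
  obtain ⟨c', hcc', hinf⟩ := h11
  rw [hc.eq_of_hasCyclicPair_one_one (hcc'.hasCyclicPair_iff.mpr hinf.hasCyclicPair)]
  exact Relation.EqvGen.refl _
end

section
/- Let (c_1,...,c_n) with n ≥ 3 be a representative of a quiddity cycle and let i be an index with c_i = 1. Then the sequence of length n−1 obtained by deleting the entry c_i and decreasing its two cyclically adjacent entries each by 1 (for interior i this is (c_1,...,c_{i−1}−1, c_{i+1}−1,...,c_n)) is a representative of a quiddity cycle. -/
/-!
Removing an ear undoes one application of the growth rule up to the dihedral action; we prove
this by induction on the derivation of `IsQuiddity c`. Rotations and reversal only move the ear.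
If `c` was grown from `q` by inserting an ear `e` and `e'` is the ear to be removed, then either
`e' = e`, or `e'` is also an ear of `q` and removing it commutes with inserting `e`. Ears are never
adjacent, since all entries of a quiddity cycle other than `(0,0)` are positive; so `e'` is two
steps from `e` (their shared neighbour is one smaller in `q`) or farther away.
-/

open List

theorem List.IsRotated.exists_eq_append {α : Type*} {l l' : List α} (h : l ~r l') :
    ∃ u v, l = u ++ v ∧ l' = v ++ u := by
  obtain ⟨n, hn, rfl⟩ := isRotated_iff_mod.1 h
  exact ⟨l.take n, l.drop n, (take_append_drop n l).symm, rotate_eq_drop_append_take hn⟩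

-- The second ear is the first one, opposite to it in a 4-cycle, two steps before or after it,
-- or farther away.
theorem ear_cases_of_isRotated {a b x y : ℕ} {t s : List ℕ} (ha : 0 < a) (hb : 0 < b)
    (h : (a + 1) :: 1 :: (b + 1) :: t ~r (x + 1) :: 1 :: (y + 1) :: s) :
    (x = a ∧ y = b ∧ s = t) ∨
    (t = [1] ∧ x = b ∧ y = a ∧ s = [1]) ∨
    (∃ r, t = r ++ [x + 1, 1] ∧ y = a ∧ s = 1 :: (b + 1) :: r) ∨
    (∃ r, t = 1 :: (y + 1) :: r ∧ x = b ∧ s = r ++ [a + 1, 1]) ∨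
    (∃ u v, t = u ++ (x + 1) :: 1 :: (y + 1) :: v ∧ s = v ++ (a + 1) :: 1 :: (b + 1) :: u) := by
  obtain ⟨u, v, hc, hd⟩ := h.exists_eq_append
  rcases v with _ | ⟨v₀, _ | ⟨v₁, _ | ⟨v₂, v⟩⟩⟩
  · rw [append_nil] at hc
    rw [nil_append, ← hc] at hd
    simp only [cons.injEq, add_left_inj, true_and] at hd
    exact Or.inl hd
  · simp only [cons_append, nil_append, cons.injEq] at hd
    obtain ⟨rfl, rfl⟩ := hd
    simp only [cons_append, cons.injEq, Nat.add_eq_right, Nat.right_eq_add] at hc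
    omega
  · simp only [cons_append, nil_append, cons.injEq] at hd
    obtain ⟨rfl, rfl, rfl⟩ := hd
    simp only [cons_append, cons.injEq, add_left_inj] at hc
    obtain ⟨rfl, hc⟩ := hc
    rcases s with _ | ⟨_, _ | ⟨_, s⟩⟩
    · simp only [nil_append, cons.injEq, Nat.right_eq_add, Nat.add_eq_right] at hc
      omega
    · simp only [cons_append, nil_append, cons.injEq, add_left_inj] at hc
      obtain ⟨rfl, rfl, rfl⟩ := hc
      exact Or.inr (Or.inl ⟨rfl, rfl, rfl, rfl⟩)
    · simp only [cons_append, cons.injEq] at hc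
      obtain ⟨rfl, rfl, rfl⟩ := hc
      exact Or.inr (Or.inr (Or.inl ⟨s, rfl, rfl, rfl⟩))
  · simp only [cons_append, cons.injEq] at hd
    obtain ⟨rfl, rfl, rfl, rfl⟩ := hd
    rcases u with _ | ⟨_, _ | ⟨_, _ | ⟨_, u⟩⟩⟩
    · simp only [nil_append, cons.injEq, add_left_inj, true_and] at hc
      obtain ⟨rfl, rfl, rfl⟩ := hc
      exact Or.inl ⟨rfl, rfl, by simp⟩
    · simp only [cons_append, nil_append, cons.injEq, Nat.right_eq_add, Nat.add_eq_right] at hc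
      omega
    · simp only [cons_append, nil_append, cons.injEq, add_left_inj] at hc
      obtain ⟨rfl, rfl, rfl, rfl⟩ := hc
      exact Or.inr (Or.inr (Or.inr (Or.inl ⟨v, rfl, rfl, rfl⟩)))
    · simp only [cons_append, cons.injEq] at hc
      obtain ⟨rfl, rfl, rfl, rfl⟩ := hc
      exact Or.inr (Or.inr (Or.inr (Or.inr ⟨u, v, rfl, rfl⟩)))

namespace IsQuiddity

variable {c d : List ℕ}

theorem rotate (h : IsQuiddity c) (k : ℕ) : IsQuiddity (c.rotate k) := by
  induction k with
  | zero => simpa using h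
  | succ k ih => exact ih.dih (Or.inl (rotate_rotate c k 1).symm)

theorem of_isRotated (h : IsQuiddity c) (hr : c ~r d) : IsQuiddity d := by
  obtain ⟨k, rfl⟩ := hr
  exact h.rotate k

theorem reverse (h : IsQuiddity c) : IsQuiddity c.reverse := h.dih (Or.inr rfl)

theorem append_comm {u v : List ℕ} (h : IsQuiddity (u ++ v)) : IsQuiddity (v ++ u) :=
  h.of_isRotated isRotated_append

theorem eq_zero_zero_or_pos (h : IsQuiddity c) :
    c = [0, 0] ∨ 3 ≤ c.length ∧ ∀ x ∈ c, 0 < x := by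
  induction h with
  | base => exact Or.inl rfl
  | dih _ hstep ih =>
    rcases hstep with rfl | rfl <;> rcases ih with rfl | ⟨hlen, hpos⟩
    · exact Or.inl rfl
    · exact Or.inr ⟨by simpa using hlen, fun x hx => hpos x (mem_rotate.1 hx)⟩
    · exact Or.inl rfl
    · exact Or.inr ⟨by simpa using hlen, fun x hx => hpos x (mem_reverse.1 hx)⟩
  | grow _ ih =>
    refine Or.inr ⟨by simp, fun x hx => ?_⟩
    rcases mem_cons.1 hx with rfl | hx
    · omega
    rcases mem_cons.1 hx with rfl | hx
    · omega
    rcases mem_cons.1 hx with rfl | hx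
    · omega
    rcases ih with h0 | ⟨-, hpos⟩
    · simp_all
    · exact hpos x (by simp [hx])

theorem of_isRotated_grow_of_grow {a b x y : ℕ} {t s : List ℕ} (hq : IsQuiddity (a :: b :: t))
    (ha : 0 < a) (hb : 0 < b)
    (ih : ∀ {x y s}, a :: b :: t ~r (x + 1) :: 1 :: (y + 1) :: s → IsQuiddity (x :: y :: s))
    (h : (a + 1) :: 1 :: (b + 1) :: t ~r (x + 1) :: 1 :: (y + 1) :: s) :
    IsQuiddity (x :: y :: s) := by
  rcases ear_cases_of_isRotated ha hb h with
    ⟨rfl, rfl, rfl⟩ | ⟨rfl, rfl, rfl, rfl⟩ | ⟨r, rfl, rfl, rfl⟩ | ⟨r, rfl, rfl, rfl⟩ |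
    ⟨u, v, rfl, rfl⟩
  · exact hq
  · obtain ⟨a, rfl⟩ := Nat.exists_eq_add_one_of_ne_zero ha.ne'
    obtain ⟨b, rfl⟩ := Nat.exists_eq_add_one_of_ne_zero hb.ne'
    have : IsQuiddity [b, a] := ih (isRotated_append (l := [a + 1]) (l' := [b + 1, 1]))
    exact (append_comm (u := [b]) (v := [a]) this).grow.append_comm (u := [a + 1, 1])
  · obtain ⟨a, rfl⟩ := Nat.exists_eq_add_one_of_ne_zero ha.ne'
    have : IsQuiddity (x :: a :: b :: r) :=
      ih (by simpa using isRotated_append (l := (a + 1) :: b :: r) (l' := [x + 1, 1]))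
    have := (append_comm (u := [x]) (v := a :: b :: r) this).grow
    simpa using this.append_comm (u := (a + 1) :: 1 :: (b + 1) :: r) (v := [x])
  · obtain ⟨b, rfl⟩ := Nat.exists_eq_add_one_of_ne_zero hb.ne'
    have : IsQuiddity (b :: y :: (r ++ [a])) :=
      ih (by simpa using isRotated_append (l := [a]) (l' := (b + 1) :: 1 :: (y + 1) :: r))
    have := (append_comm (u := b :: y :: r) (v := [a]) (by simpa using this)).grow
    simpa using this.append_comm (u := [a + 1, 1])
  · have : IsQuiddity (x :: y :: (v ++ a :: b :: u)) :=
      ih (by simpa using isRotated_append (l := a :: b :: u) (l' := (x + 1) :: 1 :: (y + 1) :: v))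
    have := (append_comm (u := x :: y :: v) (v := a :: b :: u) (by simpa using this)).grow
    simpa using this.append_comm (u := (a + 1) :: 1 :: (b + 1) :: u) (v := x :: y :: v)

theorem of_isRotated_grow (h : IsQuiddity c) {x y : ℕ} {s : List ℕ}
    (hr : c ~r (x + 1) :: 1 :: (y + 1) :: s) : IsQuiddity (x :: y :: s) := by
  induction h generalizing x y s with
  | base => simpa using hr.perm.length_eq
  | @dih c _ _ hstep ih =>
    rcases hstep with rfl | rfl
    · exact ih ((IsRotated.forall _ 1).symm.trans hr)
    · have hrev : c ~r (y + 1) :: 1 :: (x + 1) :: s.reverse := by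
        have : c ~r s.reverse ++ [y + 1, 1, x + 1] := by simpa using hr.reverse
        exact this.trans isRotated_append
      have : IsQuiddity (s ++ [x, y]) := by simpa using (ih hrev).reverse
      exact this.append_comm
  | grow hq ih =>
    rcases hq.eq_zero_zero_or_pos with h0 | ⟨-, hpos⟩
    · obtain ⟨rfl, rfl, rfl⟩ : _ ∧ _ ∧ _ := by simpa using h0
      obtain ⟨k, hk⟩ := hr
      have := (rotate_replicate 1 3 k).symm.trans hk
      simp only [reduceReplicate, cons.injEq, Nat.right_eq_add, nil_eq, true_and] at this
      obtain ⟨rfl, rfl, rfl⟩ := this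
      exact base
    · exact of_isRotated_grow_of_grow hq (hpos _ (by simp)) (hpos _ (by simp)) ih hr

end IsQuiddity

def removeEarAt (c : List ℕ) (i : ℕ) : List ℕ :=
  ((c.set ((i + 1) % c.length) (c.getD ((i + 1) % c.length) 0 - 1)).set
    ((i + c.length - 1) % c.length) (c.getD ((i + c.length - 1) % c.length) 0 - 1)).eraseIdx i

theorem removeEarAt_append (A B : List ℕ) (p q : ℕ) :
    removeEarAt (A ++ p :: 1 :: q :: B) (A.length + 1) = A ++ (p - 1) :: (q - 1) :: B := by
  have h1 : (A.length + 1 + 1) % (A ++ p :: 1 :: q :: B).length = A.length + 2 :=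
    Nat.mod_eq_of_lt (by simp; omega)
  have h2 : (A.length + 1 + (A ++ p :: 1 :: q :: B).length - 1) % (A ++ p :: 1 :: q :: B).length
      = A.length := by
    rw [show A.length + 1 + (A ++ p :: 1 :: q :: B).length - 1
      = A.length + (A ++ p :: 1 :: q :: B).length by omega, Nat.add_mod_right]
    exact Nat.mod_eq_of_lt (by simp)
  unfold removeEarAt
  rw [h1, h2]
  simp [eraseIdx_append_of_length_le]

theorem removeEarAt_zero (B : List ℕ) (p q : ℕ) :
    removeEarAt (1 :: q :: (B ++ [p])) 0 = (q - 1) :: (B ++ [p - 1]) := by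
  have h2 : (0 + (1 :: q :: (B ++ [p])).length - 1) % (1 :: q :: (B ++ [p])).length
      = B.length + 2 := by
    rw [Nat.mod_eq_of_lt (by simp)]
    simp
  unfold removeEarAt
  rw [h2]
  simp

theorem removeEarAt_last (A : List ℕ) (p q : ℕ) :
    removeEarAt (q :: (A ++ [p, 1])) (A.length + 2) = (q - 1) :: (A ++ [p - 1]) := by
  have h1 : (A.length + 2 + 1) % (q :: (A ++ [p, 1])).length = 0 := by simp
  have h2 : (A.length + 2 + (q :: (A ++ [p, 1])).length - 1) % (q :: (A ++ [p, 1])).length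
      = A.length + 1 := by
    rw [show A.length + 2 + (q :: (A ++ [p, 1])).length - 1
      = A.length + 1 + (q :: (A ++ [p, 1])).length by simp; omega, Nat.add_mod_right]
    exact Nat.mod_eq_of_lt (by simp)
  unfold removeEarAt
  rw [h1, h2]
  simp [eraseIdx_append_of_length_le]

theorem exists_isRotated_removeEarAt {c : List ℕ} {i : ℕ} (hlen : 3 ≤ c.length)
    (hear : c.getD i 0 = 1) :
    ∃ p q r, c ~r p :: 1 :: q :: r ∧ removeEarAt c i ~r (p - 1) :: (q - 1) :: r := by
  have hi : i < c.length := by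
    by_contra h
    rw [getD_eq_default _ _ (not_lt.1 h)] at hear
    exact zero_ne_one hear
  obtain ⟨A, B, rfl, rfl⟩ : ∃ A B, c = A ++ 1 :: B ∧ A.length = i := by
    refine ⟨c.take i, c.drop (i + 1), ?_, by simp; omega⟩
    rw [getD_eq_getElem _ _ hi] at hear
    calc c = c.take i ++ c.drop i := (take_append_drop i c).symm
      _ = _ := by rw [drop_eq_getElem_cons hi, hear]
  rcases eq_nil_or_concat A with rfl | ⟨A, p, rfl⟩
  · obtain ⟨q, B, p, rfl⟩ : ∃ q B' p, B = q :: (B' ++ [p]) := by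
      rcases B with _ | ⟨q, B⟩
      · simp at hlen
      rcases eq_nil_or_concat B with rfl | ⟨B, p, rfl⟩
      · simp at hlen
      exact ⟨q, B, p, by simp⟩
    refine ⟨p, q, B, isRotated_concat p (1 :: q :: B), ?_⟩
    rw [nil_append, length_nil, removeEarAt_zero]
    exact isRotated_concat (p - 1) ((q - 1) :: B)
  rcases B with _ | ⟨q, B⟩
  · rcases A with _ | ⟨q, A⟩
    · simp at hlen
    refine ⟨p, q, A, by simpa using isRotated_append (l := q :: A) (l' := [p, 1]), ?_⟩
    rw [show (q :: A).concat p ++ [1] = q :: (A ++ [p, 1]) by simp,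
      show ((q :: A).concat p).length = A.length + 2 by simp, removeEarAt_last]
    exact isRotated_concat (p - 1) ((q - 1) :: A)
  · refine ⟨p, q, B ++ A, by simpa using isRotated_append (l := A) (l' := p :: 1 :: q :: B), ?_⟩
    rw [show A.concat p ++ 1 :: q :: B = A ++ p :: 1 :: q :: B by simp,
      show (A.concat p).length = A.length + 1 by simp, removeEarAt_append]
    simpa using isRotated_append (l := A) (l' := (p - 1) :: (q - 1) :: B)

theorem quiddity_remove_ear_general (c : List ℕ) (hc : IsQuiddity c)
    (i : ℕ) (hear : c.getD i 0 = 1) :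
    IsQuiddity
      (((c.set ((i + 1) % c.length) (c.getD ((i + 1) % c.length) 0 - 1)).set
          ((i + c.length - 1) % c.length)
          (c.getD ((i + c.length - 1) % c.length) 0 - 1)).eraseIdx i) := by
  show IsQuiddity (removeEarAt c i)
  rcases hc.eq_zero_zero_or_pos with rfl | ⟨hlen, hpos⟩
  · rcases i with _ | _ | i <;> simp at hear
  obtain ⟨p, q, r, hc_rot, hrem_rot⟩ := exists_isRotated_removeEarAt hlen hear
  obtain ⟨p, rfl⟩ := Nat.exists_eq_add_one_of_ne_zero (hpos p (hc_rot.mem_iff.2 (by simp))).ne'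
  obtain ⟨q, rfl⟩ := Nat.exists_eq_add_one_of_ne_zero (hpos q (hc_rot.mem_iff.2 (by simp))).ne'
  rw [Nat.add_sub_cancel, Nat.add_sub_cancel] at hrem_rot
  exact (hc.of_isRotated_grow hc_rot).of_isRotated hrem_rot.symm

/-- Removing an ear: if `(c₁,…,cₙ)` (with `n ≥ 3`) represents a quiddity cycle and
`cᵢ = 1`, then deleting the entry `cᵢ` and decreasing its two cyclically adjacent
entries each by `1` yields again a representative of a quiddity cycle. -/
theorem quiddity_remove_ear (c : List ℕ) (hc : IsQuiddity c) (hn : 3 ≤ c.length)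
    (i : ℕ) (hi : i < c.length) (hear : c.getD i 0 = 1) :
    IsQuiddity
      (((c.set ((i + 1) % c.length) (c.getD ((i + 1) % c.length) 0 - 1)).set
          ((i + c.length - 1) % c.length)
          (c.getD ((i + c.length - 1) % c.length) 0 - 1)).eraseIdx i) :=
  quiddity_remove_ear_general c hc i hear
end

section
/- For every ℓ ∈ ℕ there exist finite sets E ⊆ 𝒜 and F ⊆ ⋃_{m≥1} ℕ₀ᵐ such that every element of F has length at least ℓ, and every quiddity cycle not belonging to E contains an element of F. -/
/-- The setoid given by the dihedral group action on finite sequences. -/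
def dihSetoid : Setoid (List ℕ) := Relation.EqvGen.setoid dihStep

/-- Classes of finite sequences modulo the dihedral action. -/
abbrev Cyc : Type := Quotient dihSetoid

/-- The class of a finite sequence modulo the dihedral action. -/
def cyc (c : List ℕ) : Cyc := Quotient.mk dihSetoid c

/-- The set `𝒜` of quiddity cycles, as classes. -/
def QuiddityCyc : Set Cyc := {x | ∃ c, IsQuiddity c ∧ x = cyc c}

/-- The set `𝒜'` of quiddity cycles of even length whose entries equal to `1`
make up exactly half of all entries. -/
def QuiddityCyc' : Set Cyc :=
  {x | ∃ c, IsQuiddity c ∧ Even c.length ∧ c.count 1 = c.length / 2 ∧ x = cyc c}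

/-- The map `ψ` on finite sequences: `(c₁,…,cₘ) ↦ (c₁+2, 1, c₂+2, 1, …, cₘ+2, 1)`. -/
def psiL (c : List ℕ) : List ℕ := (c.map fun a => [a + 2, 1]).flatten

/-! A quiddity cycle of length `n` has entry sum `3n - 6`, so its entries average less than `3`.
Averaging over all `n` rotations, some block of `L ≤ n` consecutive entries therefore has sum
at most `3L`. Hence, with `L = max ℓ 1`, every quiddity cycle of length at least `L` contains one
of the finitely many sequences of length `L` and sum at most `3L`, and the finitely many quiddity
cycles shorter than `L` form the exceptional set. -/

lemma IsQuiddity.sum_add_six {c : List ℕ} (h : IsQuiddity c) : c.sum + 6 = 3 * c.length := by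
  induction h with
  | base => rfl
  | dih _ hstep ih =>
    rcases hstep with rfl | rfl
    · rwa [(List.rotate_perm _ _).sum_eq, List.length_rotate]
    · rwa [List.sum_reverse, List.length_reverse]
  | grow _ ih =>
    simp only [List.sum_cons, List.length_cons] at ih ⊢
    omega

lemma dihEquiv_rotate (c : List ℕ) (k : ℕ) : DihEquiv c (c.rotate k) := by
  induction k with
  | zero => rw [List.rotate_zero]; exact Relation.EqvGen.refl c
  | succ k ih =>
    refine Relation.EqvGen.trans _ _ _ ih (Relation.EqvGen.rel _ _ (Or.inl ?_))
    rw [List.rotate_rotate]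

namespace List

lemma finite_setOf_length_le_sum_le (L B : ℕ) :
    {l : List ℕ | l.length ≤ L ∧ l.sum ≤ B}.Finite := by
  refine ((finite_length_le (Fin (B + 1)) L).image (map Fin.val)).subset ?_
  rintro l ⟨hlen, hsum⟩
  have hbound : ∀ x ∈ l, x < B + 1 := fun x hx => by
    have := le_sum_of_mem hx
    omega
  exact ⟨l.pmap (fun x hx => ⟨x, hx⟩) hbound, by simpa using hlen, by simp [map_pmap]⟩

lemma sum_take_rotate (l : List ℕ) (k : ℕ) {L : ℕ} (hL : L ≤ l.length) :
    ((l.rotate k).take L).sum = ∑ i ∈ Finset.range L, l.getD ((i + k) % l.length) 0 := by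
  induction L with
  | zero => simp
  | succ L ih =>
    have hL' : L < (l.rotate k).length := by rw [length_rotate]; omega
    rw [sum_take_succ _ _ hL', Finset.sum_range_succ, ih (by omega), getElem_rotate,
      getD_eq_getElem]

lemma sum_sum_take_rotate (l : List ℕ) {L : ℕ} (hL : L ≤ l.length) :
    ∑ k ∈ Finset.range l.length, ((l.rotate k).take L).sum = L * l.sum := by
  calc ∑ k ∈ Finset.range l.length, ((l.rotate k).take L).sum
      = ∑ i ∈ Finset.range L, ∑ k ∈ Finset.range l.length, l.getD ((k + i) % l.length) 0 := by
        rw [Finset.sum_comm]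
        refine Finset.sum_congr rfl fun k _ => ?_
        rw [sum_take_rotate l k hL]
        simp only [Nat.add_comm]
    _ = ∑ i ∈ Finset.range L, ((l.rotate i).take l.length).sum :=
        Finset.sum_congr rfl fun i _ => (sum_take_rotate l i le_rfl).symm
    _ = L * l.sum := by
        simp [take_of_length_le, (rotate_perm _ _).sum_eq]

lemma exists_sum_take_rotate_le {l : List ℕ} {L B : ℕ} (hL : L ≤ l.length)
    (hsum : l.sum ≤ B * l.length) : ∃ k, ((l.rotate k).take L).sum ≤ B * L := by
  rcases Nat.eq_zero_or_pos l.length with hnil | hpos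
  · exact ⟨0, by simp [length_eq_zero_iff.mp hnil]⟩
  have htotal : ∑ k ∈ Finset.range l.length, ((l.rotate k).take L).sum
      ≤ ∑ _k ∈ Finset.range l.length, B * L := by
    rw [sum_sum_take_rotate l hL, Finset.sum_const, Finset.card_range, smul_eq_mul]
    calc L * l.sum ≤ L * (B * l.length) := Nat.mul_le_mul_left _ hsum
      _ = l.length * (B * L) := by ring
  obtain ⟨k, -, hk⟩ := Finset.exists_le_of_sum_le ⟨0, Finset.mem_range.mpr hpos⟩ htotal
  exact ⟨k, hk⟩

end List

/-- For any `ℓ` there are finite sets `E ⊆ 𝒜` and `F` of finite sequences of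
length at least `ℓ` such that every quiddity cycle not in `E` contains an
element of `F`. -/
theorem local_description (ℓ : ℕ) :
    ∃ (E : Set Cyc) (F : Set (List ℕ)),
      E.Finite ∧ F.Finite ∧ E ⊆ QuiddityCyc ∧ (∀ f ∈ F, f ≠ []) ∧
      (∀ f ∈ F, ℓ ≤ f.length) ∧
      ∀ c : List ℕ, IsQuiddity c → cyc c ∉ E → ∃ f ∈ F, CycContains c f := by
  set L := max ℓ 1
  have hL : 1 ≤ L := le_max_right ℓ 1
  refine ⟨cyc '' {c | IsQuiddity c ∧ c.length < L}, {f | f.length = L ∧ f.sum ≤ 3 * L},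
    ?_, ?_, ?_, ?_, ?_, ?_⟩
  · refine ((List.finite_setOf_length_le_sum_le L (3 * L)).subset ?_).image cyc
    rintro c ⟨hc, hlen⟩
    have := hc.sum_add_six
    exact ⟨hlen.le, by omega⟩
  · exact (List.finite_setOf_length_le_sum_le L (3 * L)).subset fun f hf => ⟨hf.1.le, hf.2⟩
  · rintro _ ⟨c, ⟨hc, -⟩, rfl⟩
    exact ⟨c, hc, rfl⟩
  · rintro f ⟨hlen, -⟩ rfl
    simp only [List.length_nil] at hlen
    omega
  · rintro f ⟨hlen, -⟩
    exact hlen ▸ le_max_left ℓ 1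
  · intro c hc hcE
    have hlen : L ≤ c.length := by
      by_contra h
      exact hcE ⟨c, ⟨hc, by omega⟩, rfl⟩
    have hsum : c.sum ≤ 3 * c.length := by have := hc.sum_add_six; omega
    obtain ⟨k, hk⟩ := List.exists_sum_take_rotate_le hlen hsum
    refine ⟨(c.rotate k).take L, ⟨by rw [List.length_take, List.length_rotate]; omega, hk⟩, c.rotate k, dihEquiv_rotate c k,
      (List.take_prefix _ _).isInfix⟩
end

section
/- Let q = (q_1, q, q_2) ∈ (ℂˣ)³ be a triple for which m_1(q) is defined. Then m_1(σ_1(q)) is also defined, m_1(σ_1(q)) = m_1(q), and σ_1(σ_1(q)) = q. Analogously, if m_2(q) is defined, then m_2(σ_2(q)) is defined, m_2(σ_2(q)) = m_2(q), and σ_2(σ_2(q)) = q. -/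
/-!
Let `m` be least with `∑_{i ≤ m} a^i = 0` or `a^m b = 1`, and `b' = a^{-2m} b⁻¹`. Then
`a^m b' = (a^m b)⁻¹`, so `m` still qualifies for `(a, b')`. If some `k < m` did, write
`m = k + d + 1`: `a^k b' = 1` says `a^{m+d+1} b = 1`, and together with `a^{m+1} = 1` or
`a^m b = 1` this makes `d` (or `k`, when `a = 1`) qualify for `(a, b)`, contradicting minimality.
So `m` is unchanged, `b ↦ b'` is an involution, and the correction factors `a^{m²} b^m` and
`a^{m²} b'^m` of the outer coordinate are mutually inverse.
-/

/-- The defining set for `m₁` of a triple `(q₁, q, q₂)`. -/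
def m1Set (t : ℂ × ℂ × ℂ) : Set ℕ :=
  {m | (∑ k ∈ Finset.range (m + 1), t.1 ^ k) = 0 ∨ t.1 ^ m * t.2.1 = 1}

/-- The defining set for `m₂` of a triple `(q₁, q, q₂)`. -/
def m2Set (t : ℂ × ℂ × ℂ) : Set ℕ :=
  {m | (∑ k ∈ Finset.range (m + 1), t.2.2 ^ k) = 0 ∨ t.2.2 ^ m * t.2.1 = 1}

/-- `m₁(q)` is defined. -/
def M1Defined (t : ℂ × ℂ × ℂ) : Prop := (m1Set t).Nonempty

/-- `m₂(q)` is defined. -/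
def M2Defined (t : ℂ × ℂ × ℂ) : Prop := (m2Set t).Nonempty

/-- `m₁(q)`, the minimum of the defining set (junk value `0` if undefined). -/
noncomputable def m1 (t : ℂ × ℂ × ℂ) : ℕ := sInf (m1Set t)

/-- `m₂(q)`, the minimum of the defining set (junk value `0` if undefined). -/
noncomputable def m2 (t : ℂ × ℂ × ℂ) : ℕ := sInf (m2Set t)

/-- The reflection `σ₁(q₁, q, q₂) = (q₁, q₁^{-2m₁} q⁻¹, q₁^{m₁²} q^{m₁} q₂)`. -/
noncomputable def sigma1 (t : ℂ × ℂ × ℂ) : ℂ × ℂ × ℂ :=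
  (t.1, (t.1 ^ (2 * m1 t))⁻¹ * t.2.1⁻¹, t.1 ^ (m1 t ^ 2) * t.2.1 ^ m1 t * t.2.2)

/-- The reflection `σ₂(q₁, q, q₂) = (q₁ q^{m₂} q₂^{m₂²}, q₂^{-2m₂} q⁻¹, q₂)`. -/
noncomputable def sigma2 (t : ℂ × ℂ × ℂ) : ℂ × ℂ × ℂ :=
  (t.1 * t.2.1 ^ m2 t * t.2.2 ^ (m2 t ^ 2), (t.2.2 ^ (2 * m2 t))⁻¹ * t.2.1⁻¹, t.2.2)

open Finset

theorem pow_eq_one_of_geom_sum_eq_zero {R : Type*} [Ring R] {x : R} {n : ℕ}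
    (h : ∑ i ∈ range n, x ^ i = 0) : x ^ n = 1 := by
  rw [← sub_eq_zero, ← geom_sum_mul, h, zero_mul]

section Reflection

variable {K : Type*} [Field K] {a b : K} {k m : ℕ}

/-- `m1Set (q₁, q, q₂)` and `m2Set (q₁, q, q₂)` are `mSet q₁ q` and `mSet q₂ q` by definition. -/
def mSet (a b : K) : Set ℕ := {m | ∑ i ∈ range (m + 1), a ^ i = 0 ∨ a ^ m * b = 1}

/-- The middle coordinate `q₁^{-2m} q⁻¹` of `σ₁`, and of `σ₂` with `q₂` in place of `q₁`. -/
def reflect (a b : K) (m : ℕ) : K := (a ^ (2 * m))⁻¹ * b⁻¹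

theorem pow_mul_reflect (ha : a ≠ 0) (b : K) (m : ℕ) :
    a ^ m * reflect a b m = (a ^ m * b)⁻¹ := by
  rw [reflect, two_mul, pow_add, mul_inv, mul_inv, mul_assoc,
    mul_inv_cancel_left₀ (pow_ne_zero m ha)]

theorem reflect_reflect (ha : a ≠ 0) (b : K) (m : ℕ) : reflect a (reflect a b m) m = b := by
  rw [reflect, reflect, mul_inv, inv_inv, inv_inv, inv_mul_cancel_left₀ (pow_ne_zero _ ha)]

theorem pow_sq_mul_reflect_pow_mul (ha : a ≠ 0) (hb : b ≠ 0) (m : ℕ) :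
    a ^ (m ^ 2) * reflect a b m ^ m * (a ^ (m ^ 2) * b ^ m) = 1 := by
  have hm : 2 * m * m = m ^ 2 + m ^ 2 := by ring
  rw [reflect, mul_pow, inv_pow, inv_pow, ← pow_mul, hm, pow_add]
  field_simp

theorem mem_mSet_reflect_iff (ha : a ≠ 0) : m ∈ mSet a (reflect a b m) ↔ m ∈ mSet a b := by
  simp only [mSet, Set.mem_ofPred_eq, pow_mul_reflect ha, inv_eq_one]

theorem exists_lt_mem_mSet_of_mem_mSet_reflect (ha : a ≠ 0) (hm : m ∈ mSet a b)
    (hk : k ∈ mSet a (reflect a b m)) (hkm : k < m) : ∃ j < m, j ∈ mSet a b := by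
  obtain ⟨d, rfl⟩ : ∃ d, m = k + d + 1 := ⟨m - k - 1, by omega⟩
  rcases hk with hsum | hk
  · exact ⟨k, hkm, Or.inl hsum⟩
  have hb : a ^ (k + d + 1 + (d + 1)) * b = 1 := by
    have h2m : 2 * (k + d + 1) = k + (k + d + 1 + (d + 1)) := by ring
    rw [reflect, h2m, pow_add, mul_inv, mul_assoc, mul_inv_cancel_left₀ (pow_ne_zero k ha),
      ← mul_inv] at hk
    exact inv_eq_one.1 hk
  rcases hm with hsum | hm
  · refine ⟨d, by omega, Or.inr ?_⟩
    linear_combination hb - a ^ d * b * pow_eq_one_of_geom_sum_eq_zero hsum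
  have hd : a ^ (d + 1) = 1 := by linear_combination hb - a ^ (d + 1) * hm
  by_cases ha1 : a = 1
  · subst ha1
    exact ⟨k, hkm, Or.inr (by simpa using hm)⟩
  · exact ⟨d, by omega, Or.inl (by rw [geom_sum_eq ha1, hd, sub_self, zero_div])⟩

theorem sInf_mSet_reflect (ha : a ≠ 0) (hne : (mSet a b).Nonempty) :
    sInf (mSet a (reflect a b (sInf (mSet a b)))) = sInf (mSet a b) := by
  have hm := Nat.sInf_mem hne
  refine le_antisymm (Nat.sInf_le ((mem_mSet_reflect_iff ha).2 hm)) ?_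
  refine le_csInf ⟨_, (mem_mSet_reflect_iff ha).2 hm⟩ fun k hk => not_lt.1 fun hkm => ?_
  obtain ⟨j, hjm, hj⟩ := exists_lt_mem_mSet_of_mem_mSet_reflect ha hm hk hkm
  exact Nat.notMem_of_lt_sInf hjm hj

end Reflection

/-- If `m₁(q)` is defined for a triple of nonzero complex numbers, then
`m₁(σ₁(q))` is defined, equals `m₁(q)`, and `σ₁(σ₁(q)) = q`; analogously
for `m₂` and `σ₂`. -/
theorem sigma_involutive (q₁ q q₂ : ℂ) (h₁ : q₁ ≠ 0) (h : q ≠ 0) (h₂ : q₂ ≠ 0) :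
    (M1Defined (q₁, q, q₂) →
      M1Defined (sigma1 (q₁, q, q₂)) ∧ m1 (sigma1 (q₁, q, q₂)) = m1 (q₁, q, q₂) ∧
      sigma1 (sigma1 (q₁, q, q₂)) = (q₁, q, q₂)) ∧
    (M2Defined (q₁, q, q₂) →
      M2Defined (sigma2 (q₁, q, q₂)) ∧ m2 (sigma2 (q₁, q, q₂)) = m2 (q₁, q, q₂) ∧
      sigma2 (sigma2 (q₁, q, q₂)) = (q₁, q, q₂)) := by
  refine ⟨fun hdef => ?_, fun hdef => ?_⟩
  · set m := m1 (q₁, q, q₂)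
    have hσ : sigma1 (q₁, q, q₂) = (q₁, reflect q₁ q m, q₁ ^ (m ^ 2) * q ^ m * q₂) := rfl
    have hm : m1 (sigma1 (q₁, q, q₂)) = m := sInf_mSet_reflect h₁ hdef
    refine ⟨⟨m, (mem_mSet_reflect_iff h₁).2 (Nat.sInf_mem hdef)⟩, hm, ?_⟩
    rw [hσ] at hm ⊢
    rw [sigma1, hm]
    exact Prod.ext rfl <| Prod.ext (reflect_reflect h₁ q m)
      (by linear_combination q₂ * pow_sq_mul_reflect_pow_mul h₁ h m)
  · set m := m2 (q₁, q, q₂)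
    have hσ : sigma2 (q₁, q, q₂) = (q₁ * q ^ m * q₂ ^ (m ^ 2), reflect q₂ q m, q₂) := rfl
    have hm : m2 (sigma2 (q₁, q, q₂)) = m := sInf_mSet_reflect h₂ hdef
    refine ⟨⟨m, (mem_mSet_reflect_iff h₂).2 (Nat.sInf_mem hdef)⟩, hm, ?_⟩
    rw [hσ] at hm ⊢
    rw [sigma2, hm]
    exact Prod.ext (by linear_combination q₁ * pow_sq_mul_reflect_pow_mul h₂ h m)
      (Prod.ext (reflect_reflect h₂ q m) rfl)
end

section
/- Let ζ ∈ ℂ be a primitive 9-th root of unity and let q_0 := (ζ⁶, ζ⁸, ζ⁶). Then the characteristic sequence (c_i)_{i∈ℤ} of q_0 is well defined (q_0 is not broken) and is periodic with period 3, with c_{−1} = 2, c_0 = 2, c_1 = 5, and c_{i+3} = c_i for all i ∈ ℤ. -/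
/-- An unbroken bi-infinite sequence of triples `(qᵢ)` with `qᵢ₊₁ = σ₁(qᵢ)` for
even `i` and `qᵢ₊₁ = σ₂(qᵢ)` for odd `i`, all required `m`-values being defined. -/
def IsQChain (Q : ℤ → ℂ × ℂ × ℂ) : Prop :=
  ∀ i : ℤ, (Even i → M1Defined (Q i) ∧ Q (i + 1) = sigma1 (Q i)) ∧
    (¬ Even i → M2Defined (Q i) ∧ Q (i + 1) = sigma2 (Q i))

/-- The characteristic sequence of an unbroken chain of triples:
`cᵢ` is the `m`-value of the map relating `qᵢ` and `qᵢ₊₁`. -/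
noncomputable def charSeq (Q : ℤ → ℂ × ℂ × ℂ) (i : ℤ) : ℕ :=
  if i % 2 = 0 then m1 (Q i) else m2 (Q i)

/-
For triples whose middle entry is nonzero, `σ₁` and `σ₂` are involutions: `σ₁` does not change
`m₁`, because it fixes `q₁` and either fixes `q` (if `q₁^m₁ q = 1`) or, when `q₁^(m₁+1) = 1`,
turns the condition `q₁^k q = 1` into the same condition at `m₁ - 1 - k`; and `σ₂` is `σ₁`
conjugated by reversing the triple. So a chain of such triples is determined by `q₀`, in both
directions. For triples `(ζ^a, ζ^b, ζ^c)`, every `m`-value and reflection is computed from the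
exponents modulo `9`. Starting at `(6, 8, 6)` the exponents run through `(6, 8, 6)`, `(6, 4, 1)`,
`(6, 4, 1)`, `(6, 8, 6)`, `(1, 4, 6)`, `(1, 4, 6)` and then repeat, with `m`-values
`2, 5, 2, 2, 5, 2`.
-/

section Involution

variable {t : ℂ × ℂ × ℂ}

lemma m1_mem (h : M1Defined t) : m1 t ∈ m1Set t := Nat.sInf_mem h

lemma pow_succ_m1_eq_one (h : ∑ k ∈ Finset.range (m1 t + 1), t.1 ^ k = 0) :
    t.1 ^ (m1 t + 1) = 1 := by
  have := geom_sum_mul t.1 (m1 t + 1)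
  rw [h, zero_mul] at this
  exact sub_eq_zero.1 this.symm

lemma pow_m1_ne_zero (h : M1Defined t) : t.1 ^ m1 t ≠ 0 := by
  rcases m1_mem h with hsum | hpow
  · exact left_ne_zero_of_mul_eq_one ((pow_succ _ _).symm.trans (pow_succ_m1_eq_one hsum))
  · exact left_ne_zero_of_mul_eq_one hpow

lemma m1_sigma1 (h : M1Defined t) : m1 (sigma1 t) = m1 t := by
  rcases m1_mem h with hsum | hpow
  · refine IsLeast.csInf_eq ⟨Or.inl hsum, fun k hk => not_lt.1 fun hkm => ?_⟩
    obtain ⟨j, hj⟩ := Nat.exists_eq_add_of_lt hkm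
    rcases hk with hk | hk
    · exact Nat.notMem_of_lt_sInf hkm (Or.inl hk)
    · refine Nat.notMem_of_lt_sInf (show j < m1 t by omega) (Or.inr ?_)
      have hroot := pow_succ_m1_eq_one hsum
      simp only [sigma1, hj] at hk hroot
      have hx : t.1 ^ k ≠ 0 := by rintro h0; simp [h0] at hk
      rw [show 2 * (k + j + 1) = (k + j + 1 + 1) + k + j by ring, pow_add, pow_add, hroot,
        one_mul, mul_inv, ← mul_assoc, mul_inv_cancel_left₀ hx, ← mul_inv, inv_eq_one] at hk
      exact hk
  · have hb : (t.1 ^ (2 * m1 t))⁻¹ * t.2.1⁻¹ = t.2.1 := by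
      have hx := left_ne_zero_of_mul_eq_one hpow
      rw [eq_inv_of_mul_eq_one_right hpow, inv_inv, mul_comm 2, pow_mul]
      field_simp
    have hset : m1Set (sigma1 t) = m1Set t := by
      ext k
      simp only [m1Set, sigma1, hb]
    rw [m1, hset, m1]

lemma sigma1_sigma1 (h : M1Defined t) (hb : t.2.1 ≠ 0) : sigma1 (sigma1 t) = t := by
  set x := t.1 ^ m1 t
  have hx : x ≠ 0 := pow_m1_ne_zero h
  have e1 : t.1 ^ (m1 t ^ 2) = x ^ m1 t := by rw [sq, pow_mul]
  have e2 : t.1 ^ (2 * m1 t) = x ^ 2 := by rw [mul_comm, pow_mul]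
  clear_value x
  rw [sigma1, m1_sigma1 h]
  simp only [sigma1, e1, e2]
  ext <;> simp only
  · field_simp
  · rw [mul_pow, inv_pow, inv_pow, ← pow_mul, mul_comm 2, pow_mul]
    field_simp

lemma eq_of_sigma1_eq {t t' : ℂ × ℂ × ℂ} (ht : M1Defined t) (ht' : M1Defined t')
    (hne : (sigma1 t).2.1 ≠ 0) (h : sigma1 t = sigma1 t') : t = t' := by
  have hb : t.2.1 ≠ 0 := fun h0 => hne (by simp [sigma1, h0])
  have hb' : t'.2.1 ≠ 0 := fun h0 => hne (by rw [h]; simp [sigma1, h0])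
  rw [← sigma1_sigma1 ht hb, h, sigma1_sigma1 ht' hb']

end Involution

def tripleRev (t : ℂ × ℂ × ℂ) : ℂ × ℂ × ℂ := (t.2.2, t.2.1, t.1)

lemma tripleRev_injective : Function.Injective tripleRev :=
  fun _ _ h => congrArg tripleRev h

lemma m1_tripleRev (t : ℂ × ℂ × ℂ) : m1 (tripleRev t) = m2 t := rfl

lemma sigma2_eq_tripleRev (t : ℂ × ℂ × ℂ) : sigma2 t = tripleRev (sigma1 (tripleRev t)) := by
  rw [sigma2, sigma1, m1_tripleRev]
  exact Prod.ext (by simp only [tripleRev]; ring) rfl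

lemma eq_of_sigma2_eq {t t' : ℂ × ℂ × ℂ} (ht : M2Defined t) (ht' : M2Defined t')
    (hne : (sigma2 t).2.1 ≠ 0) (h : sigma2 t = sigma2 t') : t = t' := by
  rw [sigma2_eq_tripleRev, sigma2_eq_tripleRev] at h
  rw [sigma2_eq_tripleRev] at hne
  exact tripleRev_injective (eq_of_sigma1_eq ht ht' hne (tripleRev_injective h))

lemma IsQChain.eq_of_apply_zero_eq {Q Q' : ℤ → ℂ × ℂ × ℂ} (hQ : IsQChain Q) (hQ' : IsQChain Q')
    (h0 : Q 0 = Q' 0) (hne : ∀ i, (Q i).2.1 ≠ 0) : Q = Q' := by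
  funext i
  induction i using Int.induction_on with
  | zero => exact h0
  | succ i ih =>
    by_cases hi : Even (i : ℤ)
    · rw [((hQ i).1 hi).2, ((hQ' i).1 hi).2, ih]
    · rw [((hQ i).2 hi).2, ((hQ' i).2 hi).2, ih]
  | pred i ih =>
    set j := -(i : ℤ) - 1
    have hnext : Q (j + 1) = Q' (j + 1) := by rwa [sub_add_cancel]
    have hne' := hne (j + 1)
    by_cases hj : Even j
    · rw [((hQ j).1 hj).2] at hnext hne'
      rw [((hQ' j).1 hj).2] at hnext
      exact eq_of_sigma1_eq ((hQ j).1 hj).1 ((hQ' j).1 hj).1 hne' hnext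
    · rw [((hQ j).2 hj).2] at hnext hne'
      rw [((hQ' j).2 hj).2] at hnext
      exact eq_of_sigma2_eq ((hQ j).2 hj).1 ((hQ' j).2 hj).1 hne' hnext

lemma isQChain_of_periodic {n : ℤ} (hn : 0 < n) (hn2 : Even n) (T : ℤ → ℂ × ℂ × ℂ)
    (hT : ∀ r, 0 ≤ r → r < n → (Even r → M1Defined (T r) ∧ T ((r + 1) % n) = sigma1 (T r)) ∧
      (¬ Even r → M2Defined (T r) ∧ T ((r + 1) % n) = sigma2 (T r))) :
    IsQChain (fun i => T (i % n)) := by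
  intro i
  have hpar : Even (i % n) ↔ Even i := by
    simp only [Int.even_iff, Int.emod_emod_of_dvd i (even_iff_two_dvd.mp hn2)]
  simpa only [hpar, Int.emod_add_emod] using
    hT (i % n) (Int.emod_nonneg _ hn.ne') (Int.emod_lt_of_pos _ hn)

def powTriple (ζ : ℂ) (e : ℕ × ℕ × ℕ) : ℂ × ℂ × ℂ := (ζ ^ e.1, ζ ^ e.2.1, ζ ^ e.2.2)

section RootOfUnity

variable {ζ : ℂ} {N a b c : ℕ}

lemma mem_m1Set_powTriple_iff (hζ : IsPrimitiveRoot ζ N) (ha : ¬ N ∣ a) (k : ℕ) :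
    k ∈ m1Set (powTriple ζ (a, b, c)) ↔ N ∣ a * (k + 1) ∨ N ∣ a * k + b := by
  have h1 : ζ ^ a ≠ 1 := by rwa [Ne, hζ.pow_eq_one_iff_dvd]
  have h1' : ζ ^ a - 1 ≠ 0 := sub_ne_zero.2 h1
  simp only [m1Set, powTriple, Set.mem_ofPred_eq]
  rw [geom_sum_eq h1, div_eq_zero_iff, or_iff_left h1', sub_eq_zero, ← pow_mul, ← pow_mul,
    ← pow_add, hζ.pow_eq_one_iff_dvd, hζ.pow_eq_one_iff_dvd]

lemma m1_powTriple (hζ : IsPrimitiveRoot ζ N) (ha : ¬ N ∣ a) {v : ℕ}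
    (hv : N ∣ a * (v + 1) ∨ N ∣ a * v + b) (hmin : ∀ k < v, ¬(N ∣ a * (k + 1) ∨ N ∣ a * k + b)) :
    M1Defined (powTriple ζ (a, b, c)) ∧ m1 (powTriple ζ (a, b, c)) = v := by
  have hmem := mem_m1Set_powTriple_iff (b := b) (c := c) hζ ha
  exact ⟨⟨v, (hmem v).2 hv⟩, IsLeast.csInf_eq
    ⟨(hmem v).2 hv, fun k hk => not_lt.1 fun hkv => hmin k hkv ((hmem k).1 hk)⟩⟩

lemma sigma1_powTriple (hζ : ζ ^ N = 1) {m b' c' : ℕ} (hm : m1 (powTriple ζ (a, b, c)) = m)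
    (hb' : a * (2 * m) + b + b' ≡ 0 [MOD N]) (hc' : a * m ^ 2 + b * m + c ≡ c' [MOD N]) :
    sigma1 (powTriple ζ (a, b, c)) = powTriple ζ (a, b', c') := by
  rw [sigma1, hm]
  simp only [powTriple, ← pow_mul, ← pow_add, ← mul_inv]
  refine Prod.ext rfl (Prod.ext (inv_eq_of_mul_eq_one_right ?_) (pow_eq_pow_of_modEq hc' hζ))
  rw [← pow_add, pow_eq_pow_of_modEq hb' hζ, pow_zero]

lemma sigma1_step_powTriple (hζ : IsPrimitiveRoot ζ N) (ha : ¬ N ∣ a) {v b' c' : ℕ}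
    (hv : N ∣ a * (v + 1) ∨ N ∣ a * v + b) (hmin : ∀ k < v, ¬(N ∣ a * (k + 1) ∨ N ∣ a * k + b))
    (hb' : a * (2 * v) + b + b' ≡ 0 [MOD N]) (hc' : a * v ^ 2 + b * v + c ≡ c' [MOD N]) :
    M1Defined (powTriple ζ (a, b, c)) ∧ m1 (powTriple ζ (a, b, c)) = v ∧
      sigma1 (powTriple ζ (a, b, c)) = powTriple ζ (a, b', c') :=
  have hm := m1_powTriple (c := c) hζ ha hv hmin
  ⟨hm.1, hm.2, sigma1_powTriple hζ.pow_eq_one hm.2 hb' hc'⟩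

lemma sigma2_step_powTriple (hζ : IsPrimitiveRoot ζ N) (hc : ¬ N ∣ c) {v a' b' : ℕ}
    (hv : N ∣ c * (v + 1) ∨ N ∣ c * v + b) (hmin : ∀ k < v, ¬(N ∣ c * (k + 1) ∨ N ∣ c * k + b))
    (hb' : c * (2 * v) + b + b' ≡ 0 [MOD N]) (ha' : c * v ^ 2 + b * v + a ≡ a' [MOD N]) :
    M2Defined (powTriple ζ (a, b, c)) ∧ m2 (powTriple ζ (a, b, c)) = v ∧
      sigma2 (powTriple ζ (a, b, c)) = powTriple ζ (a', b', c) := by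
  obtain ⟨hdef, hm, hσ⟩ := sigma1_step_powTriple (c := a) hζ hc hv hmin hb' ha'
  exact ⟨hdef, hm, (sigma2_eq_tripleRev _).trans (congrArg tripleRev hσ)⟩

end RootOfUnity

def nineExp : ℤ → ℕ × ℕ × ℕ
  | 0 | 3 => (6, 8, 6)
  | 1 | 2 => (6, 4, 1)
  | _ => (1, 4, 6)

noncomputable def nineChain (ζ : ℂ) (i : ℤ) : ℂ × ℂ × ℂ := powTriple ζ (nineExp (i % 6))

section NinthRoot

variable {ζ : ℂ} (hζ : IsPrimitiveRoot ζ 9)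
include hζ

lemma nineExp_step (r : ℤ) (h0 : 0 ≤ r) (h6 : r < 6) :
    (Even r → M1Defined (powTriple ζ (nineExp r)) ∧
      m1 (powTriple ζ (nineExp r)) = (if r % 3 = 1 then 5 else 2) ∧
      sigma1 (powTriple ζ (nineExp r)) = powTriple ζ (nineExp ((r + 1) % 6))) ∧
    (¬ Even r → M2Defined (powTriple ζ (nineExp r)) ∧
      m2 (powTriple ζ (nineExp r)) = (if r % 3 = 1 then 5 else 2) ∧
      sigma2 (powTriple ζ (nineExp r)) = powTriple ζ (nineExp ((r + 1) % 6))) := by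
  interval_cases r <;> norm_num [nineExp]
  · exact sigma1_step_powTriple hζ (by decide) (by decide) (by decide) (by decide) (by decide)
  · exact sigma2_step_powTriple hζ (by decide) (by decide) (by decide) (by decide) (by decide)
  · exact sigma1_step_powTriple hζ (by decide) (by decide) (by decide) (by decide) (by decide)
  · exact sigma2_step_powTriple hζ (by decide) (by decide) (by decide) (by decide) (by decide)
  · exact sigma1_step_powTriple hζ (by decide) (by decide) (by decide) (by decide) (by decide)
  · exact sigma2_step_powTriple hζ (by decide) (by decide) (by decide) (by decide) (by decide)

lemma isQChain_nineChain : IsQChain (nineChain ζ) :=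
  isQChain_of_periodic (by norm_num) (by decide) _ fun r h0 h6 =>
    have ⟨heven, hodd⟩ := nineExp_step hζ r h0 h6
    ⟨fun h => ⟨(heven h).1, (heven h).2.2.symm⟩, fun h => ⟨(hodd h).1, (hodd h).2.2.symm⟩⟩

lemma charSeq_nineChain (i : ℤ) : charSeq (nineChain ζ) i = if i % 3 = 1 then 5 else 2 := by
  have ⟨heven, hodd⟩ := nineExp_step hζ (i % 6) (Int.emod_nonneg _ (by norm_num))
    (Int.emod_lt_of_pos _ (by norm_num))
  have h3 : i % 6 % 3 = i % 3 := Int.emod_emod_of_dvd i (by norm_num)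
  have h2 : Even (i % 6) ↔ i % 2 = 0 := by
    rw [Int.even_iff, Int.emod_emod_of_dvd i (by norm_num)]
  rw [h3, h2] at heven hodd
  unfold charSeq nineChain
  by_cases hi : i % 2 = 0
  · rw [if_pos hi]
    exact (heven hi).2.1
  · rw [if_neg hi]
    exact (hodd hi).2.1

end NinthRoot

/-- For a primitive 9th root of unity `ζ`, the triple `(ζ⁶, ζ⁸, ζ⁶)` is not
broken, and its characteristic sequence is periodic with period `3`:
`c₋₁ = 2`, `c₀ = 2`, `c₁ = 5` and `cᵢ₊₃ = cᵢ` for all `i`. -/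
theorem example_nine (ζ : ℂ) (hζ : IsPrimitiveRoot ζ 9) :
    (∃ Q : ℤ → ℂ × ℂ × ℂ, IsQChain Q ∧ Q 0 = (ζ ^ 6, ζ ^ 8, ζ ^ 6)) ∧
    ∀ Q : ℤ → ℂ × ℂ × ℂ, IsQChain Q → Q 0 = (ζ ^ 6, ζ ^ 8, ζ ^ 6) →
      charSeq Q (-1) = 2 ∧ charSeq Q 0 = 2 ∧ charSeq Q 1 = 5 ∧
      ∀ i : ℤ, charSeq Q (i + 3) = charSeq Q i := by
  have hchain := isQChain_nineChain hζ
  have hzero : nineChain ζ 0 = (ζ ^ 6, ζ ^ 8, ζ ^ 6) := rfl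
  refine ⟨⟨_, hchain, hzero⟩, fun Q hQ hQ0 => ?_⟩
  obtain rfl : nineChain ζ = Q := hchain.eq_of_apply_zero_eq hQ (hzero.trans hQ0.symm)
    fun i => pow_ne_zero _ (hζ.ne_zero (by norm_num))
  norm_num [charSeq_nineChain hζ, Int.add_emod_right]
end

section
/- Let f ∈ ℕ₀ᵐ be a finite sequence containing at least one entry equal to 1. Then every finite sequence c with ρ(c) = ι(ψ(f)) has length strictly greater than m. -/
/-- The map `ι`: prepend an entry `1`. -/
def iotaL (c : List ℕ) : List ℕ := 1 :: c

/-- One rewriting step of the map `ρ` on finite sequences: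
(a) two adjacent entries `> 1` get a `1` inserted between them and are increased;
(b) a first entry `> 1` gets a `1` prepended and is increased;
(c) a last entry `> 1` gets a `1` appended and is increased. -/
inductive rhoStep : List ℕ → List ℕ → Prop
  | mid (u v : List ℕ) (a b : ℕ) :
      rhoStep (u ++ (a + 2) :: (b + 2) :: v) (u ++ (a + 3) :: 1 :: (b + 3) :: v)
  | head (a : ℕ) (t : List ℕ) : rhoStep ((a + 2) :: t) (1 :: (a + 3) :: t)
  | last (u : List ℕ) (a : ℕ) : rhoStep (u ++ [a + 2]) (u ++ [a + 3, 1])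

/-- `ρ c = d`: iterated application of the rewriting rules starting from `c`
terminates in `d`, to which no rule applies anymore. -/
def RhoEval (c d : List ℕ) : Prop :=
  Relation.ReflTransGen rhoStep c d ∧ ∀ e, ¬ rhoStep d e

/-- One rewriting step of the map `δ` on classes: two cyclically adjacent
entries `> 1` get a `1` inserted between them and are increased. -/
def deltaStep (x y : Cyc) : Prop :=
  ∃ a b t, x = cyc ((a + 2) :: (b + 2) :: t) ∧ y = cyc ((a + 3) :: 1 :: (b + 3) :: t)

/-- `δ x = y`: iterated application of the rewriting rule starting from `x`
terminates in `y`, to which the rule does not apply anymore. -/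
def DeltaEval (x y : Cyc) : Prop :=
  Relation.ReflTransGen deltaStep x y ∧ ∀ z, ¬ deltaStep y z

/-!
A ρ-step only inserts entries `1` and increases their neighbours. Hence the map that deletes every
`1` and decreases each neighbour of a deleted `1` by one is invariant along ρ, and it sends
`ι(ψ(f))` back to `f`. It deletes exactly one entry per `1` and is the identity on sequences
without a `1`. So if `ρ(c) = ι(ψ(f))` and `1 ∈ f`, then `c` contains a `1` and
`|f| = |c| - #{i | cᵢ = 1} < |c|`.
-/

/-- The flag records whether the entry before the list was a `1`. -/
def collapseOnes : Bool → List ℕ → List ℕ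
  | _, [] => []
  | afterOne, a :: t =>
      (if a = 1 then [] else
        [a - (if afterOne then 1 else 0) - (if t.head? = some 1 then 1 else 0)])
      ++ collapseOnes (a == 1) t

lemma collapseOnes_cons (afterOne : Bool) (a : ℕ) (t : List ℕ) :
    collapseOnes afterOne (a :: t) =
      (if a = 1 then [] else
        [a - (if afterOne then 1 else 0) - (if t.head? = some 1 then 1 else 0)])
      ++ collapseOnes (a == 1) t := rfl

lemma collapseOnes_append_congr (u : List ℕ) {s s' : List ℕ}
    (hhead : s.head? = some 1 ↔ s'.head? = some 1)
    (hs : ∀ b, collapseOnes b s = collapseOnes b s') (b : Bool) :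
    collapseOnes b (u ++ s) = collapseOnes b (u ++ s') := by
  induction u generalizing b with
  | nil => exact hs b
  | cons x u ih =>
    have hhead' : (u ++ s).head? = some 1 ↔ (u ++ s').head? = some 1 := by
      cases u <;> simp [hhead]
    simp only [List.cons_append, collapseOnes_cons, ih, hhead']

lemma collapseOnes_rhoStep {c d : List ℕ} (h : rhoStep c d) :
    collapseOnes false c = collapseOnes false d := by
  cases h with
  | mid u v a b =>
    refine collapseOnes_append_congr u (by simp) (fun p => ?_) false
    cases p <;> simp [collapseOnes_cons]
  | head a t =>
    simp [collapseOnes_cons]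
  | last u a =>
    refine collapseOnes_append_congr u (by simp) (fun p => ?_) false
    cases p <;> simp [collapseOnes]

lemma collapseOnes_eq_of_reflTransGen {c d : List ℕ} (h : Relation.ReflTransGen rhoStep c d) :
    collapseOnes false c = collapseOnes false d := by
  induction h with
  | refl => rfl
  | tail _ hstep ih => rw [ih, collapseOnes_rhoStep hstep]

lemma collapseOnes_iotaL_psiL (f : List ℕ) : collapseOnes false (iotaL (psiL f)) = f := by
  induction f with
  | nil => rfl
  | cons a f ih =>
    have hpsi : psiL (a :: f) = (a + 2) :: 1 :: psiL f := by simp [psiL]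
    simpa [iotaL, hpsi, collapseOnes_cons] using ih

lemma length_collapseOnes_add_count_one (b : Bool) (c : List ℕ) :
    (collapseOnes b c).length + c.count 1 = c.length := by
  induction c generalizing b with
  | nil => rfl
  | cons a t ih =>
    rcases eq_or_ne a 1 with rfl | ha
    · simp [collapseOnes_cons, ← ih true]
      omega
    · simp [collapseOnes_cons, ha, ← ih (a == 1)]
      omega

lemma collapseOnes_false_of_one_not_mem {c : List ℕ} (h : 1 ∉ c) : collapseOnes false c = c := by
  induction c with
  | nil => rfl
  | cons a t ih =>
    have ha : a ≠ 1 := fun ha => h (ha ▸ List.mem_cons_self)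
    have ht : 1 ∉ t := fun ht => h (List.mem_cons_of_mem a ht)
    have hhead : t.head? ≠ some 1 := fun hh => ht (List.mem_of_mem_head? hh)
    simp [collapseOnes_cons, ha, hhead, beq_false_of_ne ha, ih ht]

/-- If the finite sequence `f` contains an entry `1`, then every finite sequence
`c` with `ρ(c) = ι(ψ(f))` is strictly longer than `f`. -/
theorem rho_preimage_long (f : List ℕ) (hf : 1 ∈ f) (c : List ℕ)
    (hc : RhoEval c (iotaL (psiL f))) : f.length < c.length := by
  have hcollapse : collapseOnes false c = f := by
    rw [collapseOnes_eq_of_reflTransGen hc.1, collapseOnes_iotaL_psiL]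
  have hone : 1 ∈ c := by
    by_contra hc1
    rw [collapseOnes_false_of_one_not_mem hc1] at hcollapse
    exact hc1 (hcollapse ▸ hf)
  have hlen := length_collapseOnes_add_count_one false c
  rw [hcollapse] at hlen
  have := List.count_pos_iff.mpr hone
  omega
end
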